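/- arXiv:0905.1879 — 2 statements merged into one kernel-verified Lean document; each statement's English description precedes it below -/
import Mathlib

section
/- Let C be a category with a zero object and an involution * (a contravariant endofunctor which is the identity on objects and involutive on morphisms) such that every morphism f has a Moore–Penrose generalized inverse f^(−1) with respect to *, i.e. f ∘ f^(−1) ∘ f = f, f^(−1) ∘ f ∘ f^(−1) = f^(−1), (f ∘ f^(−1))* = f ∘ f^(−1) and (f^(−1) ∘ f)* = f^(−1) ∘ f. Then C is exact if and only if C is a Baer*-category, every projection of C is closed, and every projection of C can be written as a monomorphism composed with an epimorphism. -/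
open CategoryTheory CategoryTheory.Limits

universe v u

/-- An operation assigning to each morphism a morphism in the opposite direction. -/
def MorphismOp (C : Type u) [Category.{v} C] : Type (max u v) :=
  ∀ {A B : C}, (A ⟶ B) → (B ⟶ A)

variable {C : Type u} [Category.{v} C]

/-- `s` is an involution: a contravariant endofunctor which is the identity on objects
and involutive on morphisms. -/
def IsInvolution (s : MorphismOp C) : Prop :=
  (∀ {A B D : C} (f : A ⟶ B) (g : B ⟶ D), s (f ≫ g) = s g ≫ s f) ∧
  (∀ A : C, s (𝟙 A) = 𝟙 A) ∧
  (∀ {A B : C} (f : A ⟶ B), s (s f) = f)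

/-- A projection on `A` is an idempotent endomorphism fixed by the involution `s`. -/
def IsProjection (s : MorphismOp C) {A : C} (i : A ⟶ A) : Prop :=
  i ≫ i = i ∧ s i = i

/-- `g` is a Moore–Penrose generalized inverse of `f` with respect to `s`:
`f g f = f`, `g f g = g`, `(f g)* = f g`, `(g f)* = g f`. -/
def IsMoorePenrose (s : MorphismOp C) {A B : C} (f : A ⟶ B) (g : B ⟶ A) : Prop :=
  f ≫ g ≫ f = f ∧ g ≫ f ≫ g = g ∧ s (f ≫ g) = f ≫ g ∧ s (g ≫ f) = g ≫ f

/-- `inv` makes `C` an inverse category: each morphism `f` has `inv f` as its unique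
generalized inverse (`f ∘ (inv f) ∘ f = f` and `(inv f) ∘ f ∘ (inv f) = inv f`). -/
def IsInverseOp (inv : MorphismOp C) : Prop :=
  ∀ {A B : C} (f : A ⟶ B),
    (f ≫ inv f ≫ f = f ∧ inv f ≫ f ≫ inv f = inv f) ∧
    ∀ g : B ⟶ A, f ≫ g ≫ f = f → g ≫ f ≫ g = g → g = inv f

/-- `u` is a kernel of `f`. -/
def IsKernelOf [HasZeroMorphisms C] {K A B : C} (u : K ⟶ A) (f : A ⟶ B) : Prop :=
  u ≫ f = 0 ∧ ∀ {X : C} (g : X ⟶ A), g ≫ f = 0 → ∃! h : X ⟶ K, h ≫ u = g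

/-- `v` is a cokernel of `f`. -/
def IsCokernelOf [HasZeroMorphisms C] {A B Q : C} (v : B ⟶ Q) (f : A ⟶ B) : Prop :=
  f ≫ v = 0 ∧ ∀ {X : C} (g : B ⟶ X), f ≫ g = 0 → ∃! h : Q ⟶ X, v ≫ h = g

/-- An exact category (in the sense of the paper): a category with a zero object,
kernels and cokernels, in which every monomorphism is a kernel, every epimorphism is a
cokernel, and every morphism factors as a monomorphism composed with an epimorphism. -/
structure IsExactCategory (C : Type u) [Category.{v} C] [HasZeroObject C]
    [HasZeroMorphisms C] : Prop where
  hasKernels : ∀ {A B : C} (f : A ⟶ B), ∃ (K : C) (u : K ⟶ A), IsKernelOf u f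
  hasCokernels : ∀ {A B : C} (f : A ⟶ B), ∃ (Q : C) (v : B ⟶ Q), IsCokernelOf v f
  normal : ∀ {X A : C} (u : X ⟶ A), Mono u → ∃ (B : C) (f : A ⟶ B), IsKernelOf u f
  conormal : ∀ {A B : C} (v : A ⟶ B), Epi v → ∃ (X : C) (f : X ⟶ A), IsCokernelOf v f
  monoEpiFact : ∀ {A B : C} (f : A ⟶ B),
    ∃ (I : C) (q : A ⟶ I) (p : I ⟶ B), Epi q ∧ Mono p ∧ q ≫ p = f

/-- A Baer*-structure on `C` with respect to `s`: each morphism `f` has a projection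
`f′ = prj f` on its domain with `f ∘ g = 0` iff `g` factors through `f′`. -/
structure BaerStar (C : Type u) [Category.{v} C] [HasZeroObject C] [HasZeroMorphisms C]
    (s : MorphismOp C) where
  prj : ∀ {A B : C}, (A ⟶ B) → (A ⟶ A)
  prj_isProjection : ∀ {A B : C} (f : A ⟶ B), IsProjection s (prj f)
  prj_spec : ∀ {A B X : C} (f : A ⟶ B) (g : X ⟶ A),
    g ≫ f = 0 ↔ ∃ h : X ⟶ A, g = h ≫ prj f

/-- The natural partial order on projections: `e ≤ f` iff `e = e ∘ f`. -/
def ProjLe {A : C} (e f : A ⟶ A) : Prop := f ≫ e = e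

/-- `p` is the image of `g`: the smallest subobject of the codomain of `g` through
which `g` factors. -/
def IsImageOf {A B I : C} (p : I ⟶ B) (g : A ⟶ B) : Prop :=
  Mono p ∧ (∃ t : A ⟶ I, t ≫ p = g) ∧
  ∀ {S : C} (t : A ⟶ S) (m : S ⟶ B), Mono m → t ≫ m = g → ∃ w : I ⟶ S, w ≫ m = p
/-!
In an exact category, if `u` is a kernel of `f` and `u⁻` a Moore–Penrose inverse of `u`, then
`f′ := u ∘ u⁻` is a projection and `f ∘ g = 0` iff `g` factors through `f′`: a Baer*-structure.
A projection `i = m ∘ q` with `q` epic and `m` monic satisfies `q ∘ m = 1`. If `m` is a kernel of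
some `f`, the involution turns `f ∘ i = 0` into `f ∘ i′ = f`, so every `g` with `i′ ∘ g = 0`
factors through `m`; hence `i ∘ i′′ = i′′`, while `i′ ∘ i = 0` gives `i′′ ∘ i = i`, and applying
`*` to the first identity yields `i′′ = i`.

Conversely, `f′ = p ∘ r` with `r ∘ p = 1` exhibits `p` as a kernel of `f`. This applies to an
epi-mono factorisation of `f′`, and, by closedness, to `u ∘ u⁻ = (u ∘ u⁻)′′` for a monomorphism
`u`; cokernels and conormality follow by applying `*`. Finally, an epi-mono factorisation
`f ∘ f⁻ = p ∘ q` gives the epi-mono factorisation `f = p ∘ (q ∘ f)`.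
-/

variable {s : MorphismOp C}

namespace IsInvolution

theorem map_comp (hs : IsInvolution s) {A B D : C} (f : A ⟶ B) (g : B ⟶ D) :
    s (f ≫ g) = s g ≫ s f :=
  hs.1 f g

theorem map_map (hs : IsInvolution s) {A B : C} (f : A ⟶ B) : s (s f) = f :=
  hs.2.2 f

theorem mono_map (hs : IsInvolution s) {A B : C} (v : A ⟶ B) [Epi v] : Mono (s v) where
  right_cancellation a b hab := by
    rw [← hs.map_map a, ← hs.map_map b]
    congr 1
    rw [← cancel_epi v, ← hs.map_map (v ≫ s a), ← hs.map_map (v ≫ s b), hs.map_comp v,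
      hs.map_comp v, hs.map_map, hs.map_map, hab]

variable [HasZeroObject C] [HasZeroMorphisms C]

theorem map_zero (hs : IsInvolution s) {A B : C} : s (0 : A ⟶ B) = 0 := by
  obtain ⟨Z, hZ⟩ := HasZeroObject.zero (C := C)
  rw [← zero_comp (X := A) (Y := Z) (f := 0), hs.map_comp, hZ.eq_of_tgt (s 0) 0, zero_comp]

theorem map_comp_eq_zero (hs : IsInvolution s) {A B D : C} {f : A ⟶ B} {g : B ⟶ D}
    (h : f ≫ g = 0) : s g ≫ s f = 0 := by
  rw [← hs.map_comp, h, hs.map_zero]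

theorem isCokernelOf_map (hs : IsInvolution s) {K A B : C} {m : K ⟶ A} {g : A ⟶ B}
    (h : IsKernelOf m g) : IsCokernelOf (s m) (s g) := by
  refine ⟨hs.map_comp_eq_zero h.1, fun x hx => ?_⟩
  obtain ⟨y, hy, hy_unique⟩ := h.2 (s x) (by simpa only [hs.map_map] using hs.map_comp_eq_zero hx)
  refine ⟨s y, by beta_reduce; rw [← hs.map_comp, hy, hs.map_map], fun z hz => ?_⟩
  rw [← hs.map_map z, hy_unique (s z) (by rw [← hz, hs.map_comp, hs.map_map])]

end IsInvolution

theorem IsProjection.map_eq {A : C} {i : A ⟶ A} (hi : IsProjection s i) :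
    s i = i :=
  hi.2

theorem exists_eq_comp_iff_comp_eq_self {X A : C} {e : A ⟶ A} (he : e ≫ e = e) (g : X ⟶ A) :
    (∃ h : X ⟶ A, g = h ≫ e) ↔ g ≫ e = g :=
  ⟨fun ⟨h, hg⟩ => by rw [hg, Category.assoc, he], fun hg => ⟨g, hg.symm⟩⟩

theorem comp_eq_id_of_comp_eq_idempotent {A I : C} {i : A ⟶ A} (hi : i ≫ i = i)
    {q : A ⟶ I} {p : I ⟶ A} [Epi q] [Mono p] (hqp : q ≫ p = i) : p ≫ q = 𝟙 I := by
  rw [← cancel_epi q, ← cancel_mono p]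
  simp only [Category.assoc, Category.comp_id, hqp]
  rw [← Category.assoc, hqp, hi]

namespace IsMoorePenrose

variable {A B : C} {f : A ⟶ B} {g : B ⟶ A}

theorem isProjection (h : IsMoorePenrose s f g) : IsProjection s (g ≫ f) :=
  ⟨by rw [Category.assoc, h.1], h.2.2.2⟩

theorem comp_eq_id_of_mono [Mono f] (h : IsMoorePenrose s f g) : f ≫ g = 𝟙 A := by
  rw [← cancel_mono f, Category.assoc, h.1, Category.id_comp]

end IsMoorePenrose

theorem exists_epi_mono_factorization
    (hmp : ∀ {A B : C} (f : A ⟶ B), ∃ g : B ⟶ A, IsMoorePenrose s f g)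
    (hfac : ∀ {A : C} (i : A ⟶ A), IsProjection s i →
      ∃ (I : C) (q : A ⟶ I) (p : I ⟶ A), Epi q ∧ Mono p ∧ q ≫ p = i)
    {A B : C} (f : A ⟶ B) : ∃ (I : C) (q : A ⟶ I) (p : I ⟶ B), Epi q ∧ Mono p ∧ q ≫ p = f := by
  obtain ⟨f', hf'⟩ := hmp f
  obtain ⟨I, q, p, hq, hp, hqp⟩ := hfac (f' ≫ f) hf'.isProjection
  have hq' : f' ≫ f ≫ q = q := by
    rw [← Category.assoc, ← hqp, Category.assoc,
      comp_eq_id_of_comp_eq_idempotent hf'.isProjection.1 hqp, Category.comp_id]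
  refine ⟨I, f ≫ q, p, ⟨fun a b hab => ?_⟩, hp, by rw [Category.assoc, hqp, hf'.1]⟩
  rw [← cancel_epi q, ← hq']
  simp only [Category.assoc] at hab ⊢
  rw [hab]

section ZeroMorphisms

variable [HasZeroMorphisms C]

theorem IsKernelOf.comp_eq_zero_iff {K A B X : C} {u : K ⟶ A} {f : A ⟶ B} (hu : IsKernelOf u f)
    {u' : A ⟶ K} (hu' : IsMoorePenrose s u u') (g : X ⟶ A) :
    g ≫ f = 0 ↔ ∃ h : X ⟶ A, g = h ≫ u' ≫ u := by
  rw [exists_eq_comp_iff_comp_eq_self hu'.isProjection.1]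
  refine ⟨fun hg => ?_, fun hg => by rw [← hg, Category.assoc, Category.assoc, hu.1, comp_zero,
    comp_zero]⟩
  obtain ⟨h, rfl, -⟩ := hu.2 g hg
  rw [Category.assoc, hu'.1]

variable [HasZeroObject C]

theorem IsExactCategory.exists_projection_annihilator (hE : IsExactCategory C)
    (hmp : ∀ {A B : C} (f : A ⟶ B), ∃ g : B ⟶ A, IsMoorePenrose s f g) {A B : C} (f : A ⟶ B) :
    ∃ e : A ⟶ A, IsProjection s e ∧ ∀ {X : C} (g : X ⟶ A), g ≫ f = 0 ↔ ∃ h : X ⟶ A, g = h ≫ e := by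
  obtain ⟨K, u, hu⟩ := hE.hasKernels f
  obtain ⟨u', hu'⟩ := hmp u
  exact ⟨u' ≫ u, hu'.isProjection, hu.comp_eq_zero_iff hu'⟩

noncomputable def IsExactCategory.baerStar (hE : IsExactCategory C)
    (hmp : ∀ {A B : C} (f : A ⟶ B), ∃ g : B ⟶ A, IsMoorePenrose s f g) : BaerStar C s where
  prj f := (hE.exists_projection_annihilator hmp f).choose
  prj_isProjection f := (hE.exists_projection_annihilator hmp f).choose_spec.1
  prj_spec f := (hE.exists_projection_annihilator hmp f).choose_spec.2

namespace BaerStar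

theorem comp_eq_zero_iff (Bs : BaerStar C s) {A B X : C} (f : A ⟶ B) (g : X ⟶ A) :
    g ≫ f = 0 ↔ g ≫ Bs.prj f = g := by
  rw [Bs.prj_spec, exists_eq_comp_iff_comp_eq_self (Bs.prj_isProjection f).1]

theorem prj_comp (Bs : BaerStar C s) {A B : C} (f : A ⟶ B) : Bs.prj f ≫ f = 0 :=
  (Bs.comp_eq_zero_iff f _).2 (Bs.prj_isProjection f).1

theorem isKernelOf_of_comp_eq_prj (Bs : BaerStar C s) {I A B : C} {f : A ⟶ B} {p : I ⟶ A}
    {r : A ⟶ I} [Mono p] (hpr : p ≫ r = 𝟙 I) (hrp : r ≫ p = Bs.prj f) : IsKernelOf p f := by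
  refine ⟨?_, fun g hg => ?_⟩
  · rw [← Category.id_comp p, ← hpr, Category.assoc, Category.assoc, ← Category.assoc r, hrp,
      Bs.prj_comp, comp_zero]
  · obtain ⟨h, hh⟩ := (Bs.prj_spec f g).1 hg
    rw [← hrp, ← Category.assoc] at hh
    exact ⟨h ≫ r, hh.symm, fun y hy => by rw [← cancel_mono p, hy, hh]⟩

theorem prj_prj_eq_of_isKernelOf (Bs : BaerStar C s) (hs : IsInvolution s) {I A B : C} {i : A ⟶ A}
    (hi : IsProjection s i) {q : A ⟶ I} {m : I ⟶ A} [Epi q] [Mono m] (hqm : q ≫ m = i)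
    {f : A ⟶ B} (hm : IsKernelOf m f) : Bs.prj (Bs.prj i) = i := by
  have he : IsProjection s (Bs.prj i) := Bs.prj_isProjection i
  have hie : i ≫ Bs.prj i = 0 := by
    simpa only [hi.map_eq, he.map_eq] using hs.map_comp_eq_zero (Bs.prj_comp i)
  have hef : Bs.prj i ≫ f = f := by
    have hif : i ≫ f = 0 := by rw [← hqm, Category.assoc, hm.1, comp_zero]
    have hfi : s f ≫ i = 0 := by simpa only [hi.map_eq] using hs.map_comp_eq_zero hif
    rw [← hs.map_map f, ← he.map_eq, ← hs.map_comp, (Bs.comp_eq_zero_iff i _).1 hfi]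
  have hi_prj : i ≫ Bs.prj (Bs.prj i) = i := (Bs.comp_eq_zero_iff _ i).1 hie
  have hprj_i : Bs.prj (Bs.prj i) ≫ i = Bs.prj (Bs.prj i) := by
    obtain ⟨t, ht, -⟩ := hm.2 (Bs.prj (Bs.prj i))
      (by rw [← hef, ← Category.assoc, Bs.prj_comp, zero_comp])
    rw [← ht, ← hqm, Category.assoc, ← Category.assoc m,
      comp_eq_id_of_comp_eq_idempotent (hqm ▸ hi.1) hqm, Category.id_comp]
  calc Bs.prj (Bs.prj i) = s (Bs.prj (Bs.prj i) ≫ i) := by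
        rw [hprj_i, (Bs.prj_isProjection _).map_eq]
    _ = i := by rw [hs.map_comp, hi.map_eq, (Bs.prj_isProjection _).map_eq, hi_prj]

theorem exists_isKernelOf (Bs : BaerStar C s) (hfac : ∀ {A : C} (i : A ⟶ A), IsProjection s i →
      ∃ (I : C) (q : A ⟶ I) (p : I ⟶ A), Epi q ∧ Mono p ∧ q ≫ p = i)
    {A B : C} (f : A ⟶ B) : ∃ (K : C) (u : K ⟶ A), IsKernelOf u f := by
  obtain ⟨I, q, p, hq, hp, hqp⟩ := hfac (Bs.prj f) (Bs.prj_isProjection f)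
  exact ⟨I, p, Bs.isKernelOf_of_comp_eq_prj
    (comp_eq_id_of_comp_eq_idempotent (Bs.prj_isProjection f).1 hqp) hqp⟩

theorem exists_isKernelOf_of_mono (Bs : BaerStar C s)
    (hmp : ∀ {A B : C} (f : A ⟶ B), ∃ g : B ⟶ A, IsMoorePenrose s f g)
    (hcl : ∀ {A : C} (i : A ⟶ A), IsProjection s i → Bs.prj (Bs.prj i) = i)
    {X A : C} (u : X ⟶ A) [Mono u] : ∃ (B : C) (f : A ⟶ B), IsKernelOf u f := by
  obtain ⟨u', hu'⟩ := hmp u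
  exact ⟨A, Bs.prj (u' ≫ u), Bs.isKernelOf_of_comp_eq_prj hu'.comp_eq_id_of_mono
    (hcl _ hu'.isProjection).symm⟩

end BaerStar

theorem BaerStar.isExactCategory (hs : IsInvolution s)
    (hmp : ∀ {A B : C} (f : A ⟶ B), ∃ g : B ⟶ A, IsMoorePenrose s f g) (Bs : BaerStar C s)
    (hcl : ∀ {A : C} (i : A ⟶ A), IsProjection s i → Bs.prj (Bs.prj i) = i)
    (hfac : ∀ {A : C} (i : A ⟶ A), IsProjection s i →
      ∃ (I : C) (q : A ⟶ I) (p : I ⟶ A), Epi q ∧ Mono p ∧ q ≫ p = i) :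
    IsExactCategory C where
  hasKernels := Bs.exists_isKernelOf hfac
  hasCokernels f := by
    obtain ⟨K, m, hm⟩ := Bs.exists_isKernelOf hfac (s f)
    exact ⟨K, s m, hs.map_map f ▸ hs.isCokernelOf_map hm⟩
  normal u _ := Bs.exists_isKernelOf_of_mono hmp hcl u
  conormal v _ := by
    have := hs.mono_map v
    obtain ⟨X, k, hk⟩ := Bs.exists_isKernelOf_of_mono hmp hcl (s v)
    exact ⟨X, s k, hs.map_map v ▸ hs.isCokernelOf_map hk⟩
  monoEpiFact := exists_epi_mono_factorization hmp hfac

end ZeroMorphisms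

/-- A category with zero object, an involution `*`, and Moore–Penrose
generalized inverses is exact iff it is a Baer*-category with closed projections in which
every projection factors as a monomorphism composed with an epimorphism. -/
theorem stmt0 [HasZeroObject C] [HasZeroMorphisms C] (s : MorphismOp C)
    (hs : IsInvolution s)
    (hmp : ∀ {A B : C} (f : A ⟶ B), ∃ g : B ⟶ A, IsMoorePenrose s f g) :
    IsExactCategory C ↔
      ∃ Bs : BaerStar C s,
        (∀ {A : C} (i : A ⟶ A), IsProjection s i → Bs.prj (Bs.prj i) = i) ∧
        (∀ {A : C} (i : A ⟶ A), IsProjection s i →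
          ∃ (I : C) (q : A ⟶ I) (p : I ⟶ A), Epi q ∧ Mono p ∧ q ≫ p = i) := by
  refine ⟨fun hE => ⟨hE.baerStar hmp, fun i hi => ?_, fun i _ => hE.monoEpiFact i⟩,
    fun ⟨Bs, hcl, hfac⟩ => Bs.isExactCategory hs hmp hcl hfac⟩
  obtain ⟨I, q, m, hq, hm, hqm⟩ := hE.monoEpiFact i
  obtain ⟨B, f, hf⟩ := hE.normal m hm
  exact (hE.baerStar hmp).prj_prj_eq_of_isKernelOf hs hi hqm hf
end

section
/- Let C be an exact inverse category, u : X → A a monomorphism, f : A → B a morphism, and suppose P(f)(u ∘ u*) = p ∘ p* where p : I → B is a monomorphism. Then p is the image of f ∘ u: the morphism f ∘ u factors through p, and for every factorization f ∘ u = s ∘ t with s a monomorphism, the monomorphism p factors through s; i.e. (I, p) is the smallest subobject of B through which f ∘ u factors. -/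
open CategoryTheory CategoryTheory.Limits

universe v u

variable {C : Type u} [Category.{v} C]

/-! Every idempotent is its own generalized inverse, so uniqueness of generalized inverses
forces idempotents to commute and `inv` to reverse composition. Then `P(f)(u ∘ u*)` is the
range projection `(f ∘ u) ∘ (f ∘ u)*`, and a morphism factors through `m` exactly when its
range projection is absorbed by `m ∘ m*`; both halves follow from this. -/

namespace IsInverseOp

variable {inv : MorphismOp C} (hinv : IsInverseOp inv)
include hinv

lemma comp_inv_comp {A B : C} (f : A ⟶ B) : f ≫ inv f ≫ f = f := (hinv f).1.1

lemma inv_comp_inv {A B : C} (f : A ⟶ B) : inv f ≫ f ≫ inv f = inv f := (hinv f).1.2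

lemma eq_inv {A B : C} {f : A ⟶ B} {g : B ⟶ A} (h₁ : f ≫ g ≫ f = f) (h₂ : g ≫ f ≫ g = g) :
    g = inv f :=
  (hinv f).2 g h₁ h₂

lemma inv_eq_self_of_idempotent {A : C} {e : A ⟶ A} (he : e ≫ e = e) : inv e = e :=
  (hinv.eq_inv (by rw [he, he]) (by rw [he, he])).symm

lemma idempotent_comp {A : C} {e g : A ⟶ A} (he : e ≫ e = e) (hg : g ≫ g = g) :
    (e ≫ g) ≫ e ≫ g = e ≫ g := by
  set x := inv (e ≫ g)
  have hx : x ≫ e ≫ g ≫ x = x := by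
    simpa only [Category.assoc] using hinv.inv_comp_inv (e ≫ g)
  have hgxe : g ≫ x ≫ e = x := hinv.eq_inv
    (by simpa only [Category.assoc, reassoc_of% he, reassoc_of% hg]
      using hinv.comp_inv_comp (e ≫ g))
    (by simp only [Category.assoc, reassoc_of% he, reassoc_of% hg, reassoc_of% hx])
  have hxx : x ≫ x = x :=
    calc x ≫ x = (g ≫ x ≫ e) ≫ g ≫ x ≫ e := by rw [hgxe]
      _ = g ≫ (x ≫ e ≫ g ≫ x) ≫ e := by simp only [Category.assoc]
      _ = x := by rw [hx, hgxe]
  have heg : e ≫ g = x := by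
    rw [hinv.eq_inv (f := x) (by simpa only [Category.assoc] using hx)
      (hinv.comp_inv_comp (e ≫ g)), hinv.inv_eq_self_of_idempotent hxx]
  rw [heg, hxx]

lemma idempotent_comm {A : C} {e g : A ⟶ A} (he : e ≫ e = e) (hg : g ≫ g = g) :
    e ≫ g = g ≫ e := by
  have heg := hinv.idempotent_comp he hg
  have hge := hinv.idempotent_comp hg he
  rw [hinv.eq_inv (f := e ≫ g) (g := g ≫ e)
      (by simpa only [Category.assoc, reassoc_of% he, reassoc_of% hg] using heg)
      (by simpa only [Category.assoc, reassoc_of% he, reassoc_of% hg] using hge),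
    hinv.inv_eq_self_of_idempotent heg]

lemma comp_inv_idempotent {A B : C} (f : A ⟶ B) :
    (f ≫ inv f) ≫ f ≫ inv f = f ≫ inv f := by
  simp only [Category.assoc, reassoc_of% hinv.comp_inv_comp f]

lemma inv_comp_idempotent {A B : C} (f : A ⟶ B) :
    (inv f ≫ f) ≫ inv f ≫ f = inv f ≫ f := by
  simp only [Category.assoc, reassoc_of% hinv.inv_comp_inv f]

lemma inv_comp {A B D : C} (f : A ⟶ B) (g : B ⟶ D) : inv (f ≫ g) = inv g ≫ inv f := by
  have hcomm := hinv.idempotent_comm (hinv.comp_inv_idempotent g) (hinv.inv_comp_idempotent f)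
  refine (hinv.eq_inv ?_ ?_).symm
  · calc (f ≫ g) ≫ (inv g ≫ inv f) ≫ f ≫ g = f ≫ ((g ≫ inv g) ≫ inv f ≫ f) ≫ g := by
          simp only [Category.assoc]
      _ = f ≫ g := by
          rw [hcomm]
          simp only [Category.assoc, hinv.comp_inv_comp, reassoc_of% hinv.comp_inv_comp]
  · calc (inv g ≫ inv f) ≫ (f ≫ g) ≫ inv g ≫ inv f
          = inv g ≫ ((inv f ≫ f) ≫ g ≫ inv g) ≫ inv f := by simp only [Category.assoc]
      _ = inv g ≫ inv f := by
          rw [← hcomm]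
          simp only [Category.assoc, hinv.inv_comp_inv, reassoc_of% hinv.inv_comp_inv]

lemma comp_inv_comp_of_fac {A S B : C} {g : A ⟶ B} {t : A ⟶ S} {m : S ⟶ B}
    (h : t ≫ m = g) :
    g ≫ inv m ≫ m = g := by
  rw [← h, Category.assoc, hinv.comp_inv_comp]

lemma fac_of_inv_comp_eq {A I S B : C} {g : A ⟶ B} {p : I ⟶ B} (hgp : inv g ≫ g = inv p ≫ p)
    {t : A ⟶ S} {m : S ⟶ B} (h : t ≫ m = g) : (p ≫ inv m) ≫ m = p := by
  calc (p ≫ inv m) ≫ m = (p ≫ inv p ≫ p) ≫ inv m ≫ m := by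
        rw [hinv.comp_inv_comp, Category.assoc]
    _ = p ≫ (inv g ≫ g) ≫ inv m ≫ m := by rw [hgp]; simp only [Category.assoc]
    _ = p := by
        simp only [Category.assoc, hinv.comp_inv_comp_of_fac h]
        rw [hgp, hinv.comp_inv_comp]

end IsInverseOp

theorem stmt7_general (inv : MorphismOp C)
    (hinv : IsInverseOp inv)
    {X A B I : C} (u : X ⟶ A) (f : A ⟶ B) (p : I ⟶ B)
    (hP : inv f ≫ (inv u ≫ u) ≫ f = inv p ≫ p) :
    (∃ t : X ⟶ I, t ≫ p = u ≫ f) ∧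
      ∀ {S : C} (t : X ⟶ S) (m : S ⟶ B), Mono m → t ≫ m = u ≫ f →
        ∃ w : I ⟶ S, w ≫ m = p := by
  have hrange : inv (u ≫ f) ≫ u ≫ f = inv p ≫ p := by
    simpa only [hinv.inv_comp, Category.assoc] using hP
  exact ⟨⟨_, hinv.fac_of_inv_comp_eq hrange.symm (Category.id_comp p)⟩,
    fun _ _ _ htm => ⟨_, hinv.fac_of_inv_comp_eq hrange htm⟩⟩

/-- In an exact inverse category, if `u : X ⟶ A` is mono, `f : A ⟶ B`,
and `P(f)(u ∘ u*) = p ∘ p*` with `p : I ⟶ B` mono, then `p` is the image of `f ∘ u`: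
`f ∘ u` factors through `p`, and `p` factors through every mono that `f ∘ u` factors
through. -/
theorem stmt7 [HasZeroObject C] [HasZeroMorphisms C] (inv : MorphismOp C)
    (hinv : IsInverseOp inv) (hC : IsExactCategory C)
    {X A B I : C} (u : X ⟶ A) (hu : Mono u) (f : A ⟶ B) (p : I ⟶ B) (hp : Mono p)
    (hP : inv f ≫ (inv u ≫ u) ≫ f = inv p ≫ p) :
    (∃ t : X ⟶ I, t ≫ p = u ≫ f) ∧
      ∀ {S : C} (t : X ⟶ S) (m : S ⟶ B), Mono m → t ≫ m = u ≫ f →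
        ∃ w : I ⟶ S, w ≫ m = p :=
  stmt7_general inv hinv u f p hP
end
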